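/- arXiv:2109.13092 — 5 statements merged into one kernel-verified Lean document; each statement's English description precedes it below -/
import Mathlib

section
/- Let F be a division ring and R = F[x;σ,δ] an Ore extension. Then R is a left principal ideal domain: every left ideal I of R is of the form R·g for some g ∈ R. -/
variable {F R : Type*}

/-- Degree of a skew polynomial: the sup of the support of its coordinates
in the basis of powers of `X` (degree of `0` is `0` by convention). -/
noncomputable def deg [DivisionRing F] [Ring R] [Module F R]
    (b : Module.Basis ℕ F R) (f : R) : ℕ := (b.repr f).support.sup id

/-!
Multiplying `g` on the left by `X ^ k` raises its degree by exactly `k`: the leading coefficient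
of `X * g` is `σ` of that of `g`, and `σ` is injective on the division ring `F`. So a left
multiple `c X ^ k g` cancels the leading term of any `f` with `deg g ≤ deg f`, which gives right
division with remainder. A nonzero `g` of minimal degree in a left ideal `I` then generates it,
since the remainder of any `f ∈ I` on division by `g` lies in `I`.
-/

section Degree

variable [DivisionRing F] [Ring R] [Module F R] (b : Module.Basis ℕ F R) {f h : R} {n N : ℕ}

lemma le_deg_of_repr_ne_zero (hn : b.repr f n ≠ 0) : n ≤ deg b f :=
  Finset.le_sup (f := id) (Finsupp.mem_support_iff.mpr hn)

lemma repr_eq_zero_of_deg_lt (hn : deg b f < n) : b.repr f n = 0 :=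
  not_not.mp fun h => (le_deg_of_repr_ne_zero b h).not_gt hn

lemma repr_deg_ne_zero (hf : f ≠ 0) : b.repr f (deg b f) ≠ 0 := by
  have hs : (b.repr f).support.Nonempty := by simpa using hf
  obtain ⟨n, hn, hsup⟩ := Finset.exists_mem_eq_sup _ hs id
  rw [deg, hsup]
  exact Finsupp.mem_support_iff.mp hn

lemma deg_le_of_repr_eq_zero (h : ∀ n, N < n → b.repr f n = 0) : deg b f ≤ N :=
  Finset.sup_le fun n hn =>
    not_lt.mp fun hlt => Finsupp.mem_support_iff.mp hn (h n hlt)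

lemma deg_smul_le (c : F) (f : R) : deg b (c • f) ≤ deg b f := by
  rw [deg, deg, map_smul]
  exact Finset.sup_mono Finsupp.support_smul

lemma sub_eq_zero_or_deg_sub_lt (hf : deg b f ≤ N) (hh : deg b h ≤ N)
    (he : b.repr f N = b.repr h N) : f - h = 0 ∨ deg b (f - h) < N := by
  refine or_iff_not_imp_left.mpr fun hne => lt_of_not_ge fun hN => repr_deg_ne_zero b hne ?_
  rw [map_sub, Finsupp.sub_apply]
  rcases hN.eq_or_lt with heq | hlt
  · rw [← heq, he, sub_self]
  · rw [repr_eq_zero_of_deg_lt b (hf.trans_lt hlt), repr_eq_zero_of_deg_lt b (hh.trans_lt hlt),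
      sub_self]

lemma exists_sub_smul_eq_zero_or_deg_lt (hh : h ≠ 0) (hdeg : deg b h = deg b f) :
    ∃ c : F, f - c • h = 0 ∨ deg b (f - c • h) < deg b f := by
  have hlead : b.repr h (deg b f) ≠ 0 := hdeg ▸ repr_deg_ne_zero b hh
  refine ⟨b.repr f (deg b f) * (b.repr h (deg b f))⁻¹,
    sub_eq_zero_or_deg_sub_lt b le_rfl ((deg_smul_le b _ h).trans hdeg.le) ?_⟩
  rw [map_smul, Finsupp.smul_apply, smul_eq_mul, mul_assoc, inv_mul_cancel₀ hlead, mul_one]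

end Degree

section SkewPolynomial

variable [DivisionRing F] [Ring R] [Module F R]
    (σ : F →+* F) (δ : F →+ F)
    (i : F →+* R) (X : R)
    (hsmul : ∀ (a : F) (r : R), a • r = i a * r)
    (b : Module.Basis ℕ F R) (hb : ∀ n : ℕ, b n = X ^ n)
    (hcomm : ∀ a : F, X * i a = i (σ a) * X + i (δ a))

include hb in
lemma repr_smul_X_pow (a : F) (n : ℕ) : b.repr (a • X ^ n) = Finsupp.single n a := by
  rw [← hb, map_smul, b.repr_self, Finsupp.smul_single, smul_eq_mul, mul_one]

include hsmul hcomm in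
lemma X_mul_smul_X_pow (a : F) (n : ℕ) :
    X * (a • X ^ n) = σ a • X ^ (n + 1) + δ a • X ^ n := by
  rw [hsmul, ← mul_assoc, hcomm, add_mul, hsmul, hsmul, mul_assoc, ← pow_succ']

include hsmul hb hcomm in
lemma repr_X_mul (f : R) :
    b.repr (X * f) =
      (b.repr f).sum fun n a => Finsupp.single (n + 1) (σ a) + Finsupp.single n (δ a) := by
  conv_lhs => rw [← b.linearCombination_repr f, Finsupp.linearCombination_apply, Finsupp.sum,
    Finset.mul_sum, map_sum]
  refine Finset.sum_congr rfl fun n _ => ?_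
  rw [hb, X_mul_smul_X_pow σ δ i X hsmul hcomm, map_add, repr_smul_X_pow X b hb,
    repr_smul_X_pow X b hb]

include hsmul hb hcomm in
lemma X_mul_ne_zero_and_deg {f : R} (hf : f ≠ 0) :
    X * f ≠ 0 ∧ deg b (X * f) = deg b f + 1 := by
  have hcoeff : ∀ m, b.repr (X * f) m = (b.repr f).sum fun n a =>
      (if n + 1 = m then σ a else 0) + (if n = m then δ a else 0) := fun m => by
    simp only [repr_X_mul σ δ i X hsmul b hb hcomm, Finsupp.finsetSum_apply, Finsupp.sum,
      Finsupp.add_apply, Finsupp.single_apply]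
  have hlead : b.repr (X * f) (deg b f + 1) = σ (b.repr f (deg b f)) := by
    rw [hcoeff, Finsupp.sum, Finset.sum_eq_single (deg b f)]
    · simp
    · intro n hn hne
      have := le_deg_of_repr_ne_zero b (Finsupp.mem_support_iff.mp hn)
      rw [if_neg (by omega), if_neg (by omega), add_zero]
    · exact fun h => (h (Finsupp.mem_support_iff.mpr (repr_deg_ne_zero b hf))).elim
  have hlead_ne : b.repr (X * f) (deg b f + 1) ≠ 0 := by
    rw [hlead, map_ne_zero]
    exact repr_deg_ne_zero b hf
  refine ⟨fun h0 => hlead_ne (by simp [h0]), le_antisymm ?_ (le_deg_of_repr_ne_zero b hlead_ne)⟩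
  refine deg_le_of_repr_eq_zero b fun m hm => ?_
  rw [hcoeff]
  refine Finset.sum_eq_zero fun n hn => ?_
  have := le_deg_of_repr_ne_zero b (Finsupp.mem_support_iff.mp hn)
  dsimp only
  rw [if_neg (by omega), if_neg (by omega), add_zero]

include hsmul hb hcomm in
lemma X_pow_mul_ne_zero_and_deg {g : R} (hg : g ≠ 0) (k : ℕ) :
    X ^ k * g ≠ 0 ∧ deg b (X ^ k * g) = k + deg b g := by
  induction k with
  | zero => simpa using hg
  | succ k ih =>
    obtain ⟨hne, hdeg⟩ := X_mul_ne_zero_and_deg σ δ i X hsmul b hb hcomm ih.1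
    rw [pow_succ', mul_assoc]
    exact ⟨hne, by rw [hdeg, ih.2]; omega⟩

include hsmul hb hcomm in
lemma exists_sub_mul_eq_zero_or_deg_lt {f g : R} (hg : g ≠ 0) (hle : deg b g ≤ deg b f) :
    ∃ q, f - q * g = 0 ∨ deg b (f - q * g) < deg b f := by
  obtain ⟨hh, hdeg⟩ := X_pow_mul_ne_zero_and_deg σ δ i X hsmul b hb hcomm hg (deg b f - deg b g)
  obtain ⟨c, hc⟩ := exists_sub_smul_eq_zero_or_deg_lt (f := f) b hh (by omega)
  refine ⟨i c * X ^ (deg b f - deg b g), ?_⟩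
  rwa [mul_assoc, ← hsmul]

include hsmul hb hcomm in
theorem exists_eq_mul_add {g : R} (hg : g ≠ 0) (f : R) :
    ∃ q r, f = q * g + r ∧ (r = 0 ∨ deg b r < deg b g) := by
  induction hn : deg b f using Nat.strong_induction_on generalizing f with
  | _ n ih =>
    by_cases hsmall : f = 0 ∨ deg b f < deg b g
    · exact ⟨0, f, by rw [zero_mul, zero_add], hsmall⟩
    push Not at hsmall
    obtain ⟨q, hq⟩ := exists_sub_mul_eq_zero_or_deg_lt σ δ i X hsmul b hb hcomm hg hsmall.2
    obtain ⟨q', r, hqr, hr⟩ : ∃ q' r, f - q * g = q' * g + r ∧ (r = 0 ∨ deg b r < deg b g) := by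
      rcases hq with h0 | hlt
      · exact ⟨0, 0, by rw [h0, zero_mul, add_zero], Or.inl rfl⟩
      · exact ih _ (hn ▸ hlt) _ rfl
    exact ⟨q' + q, r, by rw [add_mul, add_right_comm, ← hqr, sub_add_cancel], hr⟩

end SkewPolynomial

theorem skew_left_PID_general [DivisionRing F] [Ring R] [Module F R]
    (σ : F →+* F) (δ : F →+ F)
    (i : F →+* R) (X : R)
    (hsmul : ∀ (a : F) (r : R), a • r = i a * r)
    (b : Module.Basis ℕ F R) (hb : ∀ n : ℕ, b n = X ^ n)
    (hcomm : ∀ a : F, X * i a = i (σ a) * X + i (δ a))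
    (I : Ideal R) :
    ∃ g : R, I = Ideal.span {g} := by
  classical
  by_cases hI : I = ⊥
  · exact ⟨0, by rw [hI, eq_comm, Ideal.span_singleton_eq_bot]⟩
  have hdegs : ∃ n, ∃ g ∈ I, g ≠ 0 ∧ deg b g = n := by
    obtain ⟨g, hgI, hg⟩ := Submodule.exists_mem_ne_zero_of_ne_bot hI
    exact ⟨_, g, hgI, hg, rfl⟩
  obtain ⟨g, hgI, hg, hgdeg⟩ := Nat.find_spec hdegs
  refine ⟨g, le_antisymm (fun f hf => ?_) (Ideal.span_le.mpr (by simpa using hgI))⟩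
  obtain ⟨q, r, rfl, hr⟩ := exists_eq_mul_add σ δ i X hsmul b hb hcomm hg f
  have hrI : r ∈ I := by simpa using I.sub_mem hf (I.mul_mem_left q hgI)
  obtain rfl : r = 0 := by
    by_contra hr0
    exact Nat.find_min hdegs (hgdeg ▸ hr.resolve_left hr0) ⟨r, hrI, hr0, rfl⟩
  simpa using Ideal.mul_mem_left _ q (Ideal.mem_span_singleton_self g)

/-- An Ore extension over a division ring is a left principal ideal domain:
every left ideal is of the form `R·g`. -/
theorem skew_left_PID [DivisionRing F] [Ring R] [Module F R]
    (σ : F →+* F) (δ : F →+ F)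
    (hδ : ∀ a b : F, δ (a * b) = σ a * δ b + δ a * b)
    (i : F →+* R) (X : R)
    (hsmul : ∀ (a : F) (r : R), a • r = i a * r)
    (b : Module.Basis ℕ F R) (hb : ∀ n : ℕ, b n = X ^ n)
    (hcomm : ∀ a : F, X * i a = i (σ a) * X + i (δ a))
    (I : Ideal R) :
    ∃ g : R, I = Ideal.span {g} :=
  skew_left_PID_general σ δ i X hsmul b hb hcomm I
end

section
/- Let F be a division ring and R = F[x;σ,δ]. Two non-constant skew polynomials f, g ∈ R of degrees m and n respectively have a common non-unit right factor in R if and only if there exist c, d ∈ R, not both zero, with cf + dg = 0, deg(c) < n, and deg(d) < m. -/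
variable {F R : Type*}

/-!
The degree is additive on products because `σ` is injective, so `R` is a domain with a right
division algorithm and every left ideal is principal. Hence `f` and `g` have a common right factor
of positive degree iff `1 ∉ Rf + Rg`.

The `F`-linear map `(c, d) ↦ c f + d g` from pairs with `deg c < n`, `deg d < m` to polynomials
of degree `< m + n` goes between spaces of the same dimension `m + n`, so it is injective iff
surjective. If `1 ∉ Rf + Rg` it misses `1`, so it has a nonzero kernel element. Conversely, if
`c f + d g = 0` with `c ≠ 0`, `deg c < n`, and `1 = u f + v g`, then reducing the coefficient of
`f` modulo `c` writes every `y = y u f + y v g` of degree `< m + n` in the image, so the map would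
be bijective and `(c, d) = 0`.
-/

open Module

section Degree

variable [DivisionRing F] [Ring R] [Module F R] (b : Basis ℕ F R)

noncomputable def degLT (k : ℕ) : Submodule F R := Submodule.span F (b '' Set.Iio k)

noncomputable def leadCoeff (p : R) : F := b.repr p (deg b p)

instance (k : ℕ) : FiniteDimensional F (degLT b k) :=
  FiniteDimensional.span_of_finite F ((Set.finite_Iio k).image _)

theorem finrank_degLT (k : ℕ) : finrank F (degLT b k) = k := by
  have h := finrank_span_eq_card (b.linearIndependent.comp _ (Fin.val_injective (n := k)))
  rwa [Set.range_comp, Fin.range_val, Fintype.card_fin] at h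

variable {b}

@[simp]
theorem deg_zero : deg b (0 : R) = 0 := by
  simp [deg]

theorem ne_zero_of_deg_pos {p : R} (hp : 0 < deg b p) : p ≠ 0 := by
  rintro rfl
  simp at hp

theorem deg_basis (k : ℕ) : deg b (b k) = k := by
  simp [deg]

theorem le_deg_of_repr_ne_zero_s10 {p : R} {k : ℕ} (h : b.repr p k ≠ 0) : k ≤ deg b p :=
  Finset.le_sup (f := id) (Finsupp.mem_support_iff.mpr h)

theorem leadCoeff_ne_zero {p : R} (hp : p ≠ 0) : leadCoeff b p ≠ 0 := by
  obtain ⟨k, hk, hdeg⟩ := Finset.exists_mem_eq_sup _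
    (Finsupp.support_nonempty_iff.2 ((map_ne_zero_iff _ b.repr.injective).2 hp)) id
  rw [leadCoeff, deg, hdeg]
  exact Finsupp.mem_support_iff.mp hk

theorem deg_le_iff {p : R} {k : ℕ} : deg b p ≤ k ↔ ∀ t, k < t → b.repr p t = 0 := by
  simp only [deg, Finset.sup_le_iff, Finsupp.mem_support_iff, id]
  exact forall_congr' fun t => not_imp_comm.trans (by rw [not_le])

theorem mem_degLT_iff_repr {p : R} {k : ℕ} :
    p ∈ degLT b k ↔ ∀ t, k ≤ t → b.repr p t = 0 := by
  simp only [degLT, b.mem_span_image, Set.subset_def, Finset.mem_coe, Finsupp.mem_support_iff,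
    Set.mem_Iio]
  exact forall_congr' fun t => not_imp_comm.trans (by rw [not_lt])

theorem mem_degLT_succ_iff {p : R} {k : ℕ} : p ∈ degLT b (k + 1) ↔ deg b p ≤ k := by
  simp only [mem_degLT_iff_repr, deg_le_iff, Nat.succ_le_iff]

theorem mem_degLT_iff {p : R} {k : ℕ} : p ∈ degLT b k ↔ p = 0 ∨ deg b p < k := by
  constructor
  · intro hp
    refine or_iff_not_imp_left.2 fun hp0 => not_le.1 fun hk => ?_
    exact leadCoeff_ne_zero hp0 (mem_degLT_iff_repr.1 hp _ hk)
  · rintro (rfl | hk)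
    · exact zero_mem _
    · obtain ⟨k, rfl⟩ := Nat.exists_eq_add_of_lt hk
      exact mem_degLT_iff_repr.2 fun t ht => deg_le_iff.1 le_rfl t (by omega)

theorem deg_lt_of_mem_degLT {p : R} {k : ℕ} (hk : 0 < k) (hp : p ∈ degLT b k) : deg b p < k :=
  (mem_degLT_iff.1 hp).elim (fun h => h ▸ deg_zero (b := b) ▸ hk) id

theorem degLT_mono {k l : ℕ} (h : k ≤ l) : degLT b k ≤ degLT b l :=
  Submodule.span_mono (Set.image_mono (Set.Iio_subset_Iio h))

theorem basis_mem_degLT {j k : ℕ} (h : j < k) : b j ∈ degLT b k :=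
  Submodule.subset_span ⟨j, h, rfl⟩

theorem sub_smul_basis_mem_degLT_succ {p : R} {a : F} {k : ℕ} (h : p - a • b k ∈ degLT b k) :
    p ∈ degLT b (k + 1) := by
  simpa using add_mem (degLT_mono k.le_succ h)
    (Submodule.smul_mem _ a (basis_mem_degLT k.lt_succ_self))

theorem repr_eq_of_sub_smul_basis_mem_degLT {p : R} {a : F} {k : ℕ}
    (h : p - a • b k ∈ degLT b k) : b.repr p k = a :=
  sub_eq_zero.1 (by simpa using mem_degLT_iff_repr.1 h k le_rfl)

theorem ne_zero_of_sub_smul_basis_mem_degLT {p : R} {a : F} {k : ℕ} (ha : a ≠ 0)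
    (h : p - a • b k ∈ degLT b k) : p ≠ 0 := by
  rintro rfl
  exact ha (by simpa using (repr_eq_of_sub_smul_basis_mem_degLT h).symm)

theorem deg_eq_of_sub_smul_basis_mem_degLT {p : R} {a : F} {k : ℕ} (ha : a ≠ 0)
    (h : p - a • b k ∈ degLT b k) : deg b p = k :=
  le_antisymm (mem_degLT_succ_iff.1 (sub_smul_basis_mem_degLT_succ h))
    (le_deg_of_repr_ne_zero_s10 (repr_eq_of_sub_smul_basis_mem_degLT h ▸ ha))

theorem sub_repr_smul_basis_mem_degLT {p : R} {k : ℕ} (hp : p ∈ degLT b (k + 1)) :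
    p - b.repr p k • b k ∈ degLT b k := by
  refine mem_degLT_iff_repr.2 fun t ht => ?_
  rcases ht.eq_or_lt with rfl | ht
  · simp
  · simp [mem_degLT_iff_repr.1 hp t ht, ht.ne]

theorem sub_leadCoeff_smul_basis_mem_degLT (p : R) :
    p - leadCoeff b p • b (deg b p) ∈ degLT b (deg b p) :=
  sub_repr_smul_basis_mem_degLT (mem_degLT_succ_iff.2 le_rfl)

theorem iterate_leadCoeff_ne_zero (σ : F →+* F) {p : R} (hp : p ≠ 0) (n : ℕ) :
    (⇑σ)^[n] (leadCoeff b p) ≠ 0 :=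
  (σ.injective.iterate n).ne_iff' (iterate_map_zero σ n) |>.2 (leadCoeff_ne_zero hp)

end Degree

structure IsSkewPolyBasis [DivisionRing F] [Ring R] [Module F R] (σ : F →+* F) (δ : F →+ F)
    (X : R) (b : Basis ℕ F R) : Prop where
  basis_eq_pow : ∀ n, b n = X ^ n
  X_mul_smul : ∀ (a : F) (p : R), X * (a • p) = σ a • (X * p) + δ a • p

namespace IsSkewPolyBasis

variable [DivisionRing F] [Ring R] [Module F R]
  {σ : F →+* F} {δ : F →+ F} {X : R} {b : Basis ℕ F R} (hR : IsSkewPolyBasis σ δ X b)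
include hR

theorem X_mul_basis (k : ℕ) : X * b k = b (k + 1) := by
  rw [hR.basis_eq_pow, hR.basis_eq_pow, pow_succ']

theorem one_mem_degLT {k : ℕ} (hk : 0 < k) : (1 : R) ∈ degLT b k := by
  simpa [hR.basis_eq_pow] using basis_mem_degLT (b := b) hk

theorem deg_one : deg b (1 : R) = 0 := by
  simpa [hR.basis_eq_pow] using deg_basis (b := b) 0

theorem X_mul_mem_degLT {p : R} {k : ℕ} (hp : p ∈ degLT b k) : X * p ∈ degLT b (k + 1) := by
  induction hp using Submodule.closure_induction with
  | zero => simp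
  | add p q _ _ hp hq => rw [mul_add]; exact add_mem hp hq
  | smul_mem a p hp =>
    obtain ⟨j, hj : j < k, rfl⟩ := hp
    rw [hR.X_mul_smul, hR.X_mul_basis]
    exact add_mem (Submodule.smul_mem _ _ (basis_mem_degLT (by omega)))
      (Submodule.smul_mem _ _ (basis_mem_degLT (by omega)))

theorem X_pow_mul_mem_degLT {p : R} {k : ℕ} (hp : p ∈ degLT b k) (e : ℕ) :
    X ^ e * p ∈ degLT b (k + e) := by
  induction e with
  | zero => simpa using hp
  | succ e ih => rw [pow_succ', mul_assoc, ← add_assoc]; exact hR.X_mul_mem_degLT ih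

theorem X_pow_mul_sub_smul_mem_degLT {p : R} {a : F} {k : ℕ} (h : p - a • b k ∈ degLT b k)
    (e : ℕ) : X ^ e * p - (⇑σ)^[e] a • b (k + e) ∈ degLT b (k + e) := by
  induction e with
  | zero => simpa using h
  | succ e ih =>
    have key : X ^ (e + 1) * p - (⇑σ)^[e + 1] a • b (k + (e + 1)) =
        X * (X ^ e * p - (⇑σ)^[e] a • b (k + e)) + δ ((⇑σ)^[e] a) • b (k + e) := by
      rw [mul_sub, hR.X_mul_smul, hR.X_mul_basis, pow_succ', mul_assoc,
        Function.iterate_succ_apply', ← add_assoc]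
      abel
    rw [key, ← add_assoc]
    exact add_mem (hR.X_mul_mem_degLT ih)
      (Submodule.smul_mem _ _ (basis_mem_degLT (Nat.lt_succ_self _)))

variable [IsScalarTower F R R]

theorem mul_mem_degLT {p q : R} {k l : ℕ} (hp : p ∈ degLT b k) (hq : q ∈ degLT b (l + 1)) :
    p * q ∈ degLT b (k + l) := by
  induction hp using Submodule.closure_induction with
  | zero => simp
  | add p p' _ _ hp hp' => rw [add_mul]; exact add_mem hp hp'
  | smul_mem a p hp =>
    obtain ⟨j, hj : j < k, rfl⟩ := hp
    rw [smul_mul_assoc, hR.basis_eq_pow]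
    exact Submodule.smul_mem _ _ (degLT_mono (by omega) (hR.X_pow_mul_mem_degLT hq j))

theorem mul_mem_degLT_add_deg {p : R} {k : ℕ} (hp : p ∈ degLT b k) (q : R) :
    p * q ∈ degLT b (k + deg b q) :=
  hR.mul_mem_degLT hp (mem_degLT_succ_iff.2 le_rfl)

theorem mul_sub_smul_mem_degLT {p q : R} {a c : F} {k l : ℕ} (hp : p - a • b k ∈ degLT b k)
    (hq : q - c • b l ∈ degLT b l) :
    p * q - (a * (⇑σ)^[k] c) • b (k + l) ∈ degLT b (k + l) := by
  have key : p * q - (a * (⇑σ)^[k] c) • b (k + l) =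
      (p - a • b k) * q + a • (X ^ k * q - (⇑σ)^[k] c • b (l + k)) := by
    rw [sub_mul, smul_mul_assoc, hR.basis_eq_pow k, smul_sub, mul_smul, add_comm l k]
    abel
  rw [key]
  exact add_mem (hR.mul_mem_degLT hp (sub_smul_basis_mem_degLT_succ hq))
    (Submodule.smul_mem _ _ (add_comm l k ▸ hR.X_pow_mul_sub_smul_mem_degLT hq k))

theorem mul_sub_leadCoeff_smul_mem_degLT (p q : R) :
    p * q - (leadCoeff b p * (⇑σ)^[deg b p] (leadCoeff b q)) • b (deg b p + deg b q) ∈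
      degLT b (deg b p + deg b q) :=
  hR.mul_sub_smul_mem_degLT (sub_leadCoeff_smul_basis_mem_degLT p)
    (sub_leadCoeff_smul_basis_mem_degLT q)

theorem deg_mul {p q : R} (hp : p ≠ 0) (hq : q ≠ 0) : deg b (p * q) = deg b p + deg b q :=
  deg_eq_of_sub_smul_basis_mem_degLT
    (mul_ne_zero (leadCoeff_ne_zero hp) (iterate_leadCoeff_ne_zero σ hq _))
    (hR.mul_sub_leadCoeff_smul_mem_degLT p q)

theorem noZeroDivisors : NoZeroDivisors R where
  eq_zero_or_eq_zero_of_mul_eq_zero {p q} hpq := by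
    by_contra! h
    exact ne_zero_of_sub_smul_basis_mem_degLT
      (mul_ne_zero (leadCoeff_ne_zero h.1) (iterate_leadCoeff_ne_zero σ h.2 _))
      (hR.mul_sub_leadCoeff_smul_mem_degLT p q) hpq

theorem mul_mem_degLT_iff {p q : R} {k : ℕ} (hq : q ≠ 0) :
    p * q ∈ degLT b (k + deg b q) ↔ p ∈ degLT b k := by
  have := hR.noZeroDivisors
  refine ⟨fun h => ?_, fun hp => hR.mul_mem_degLT_add_deg hp q⟩
  rcases eq_or_ne p 0 with rfl | hp
  · exact zero_mem _
  · rcases mem_degLT_iff.1 h with h0 | hlt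
    · exact absurd h0 (mul_ne_zero hp hq)
    · rw [hR.deg_mul hp hq] at hlt
      exact mem_degLT_iff.2 (Or.inr (by omega))

theorem exists_sub_mul_mem_degLT {g : R} (hg : g ≠ 0) (f : R) :
    ∃ q, f - q * g ∈ degLT b (deg b g) := by
  suffices ∀ N, ∀ f ∈ degLT b (deg b g + N), ∃ q, f - q * g ∈ degLT b (deg b g) from
    this _ f (degLT_mono (Nat.le_add_left _ _) (mem_degLT_succ_iff.2 le_rfl))
  intro N
  induction N with
  | zero => exact fun f hf => ⟨0, by simpa using hf⟩
  | succ N ih =>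
    intro f hf
    set a := b.repr f (deg b g + N)
    set u := a * ((⇑σ)^[N] (leadCoeff b g))⁻¹
    have hu : u * (⇑σ)^[N] (leadCoeff b g) = a :=
      inv_mul_cancel_right₀ (iterate_leadCoeff_ne_zero σ hg N) a
    have hmul := hR.mul_sub_smul_mem_degLT (p := u • b N) (a := u) (k := N) (by simp)
      (sub_leadCoeff_smul_basis_mem_degLT g)
    rw [hu, add_comm N] at hmul
    have hlower : f - (u • b N) * g ∈ degLT b (deg b g + N) := by
      convert sub_mem (sub_repr_smul_basis_mem_degLT (k := deg b g + N) hf) hmul using 1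
      abel
    obtain ⟨q, hq⟩ := ih _ hlower
    exact ⟨u • b N + q, by rwa [add_mul, ← sub_sub]⟩

theorem isPrincipalIdealRing : IsPrincipalIdealRing R where
  principal I := by
    rcases eq_or_ne I ⊥ with rfl | hne
    · exact bot_isPrincipal
    obtain ⟨h, ⟨hI, h0⟩, hmin⟩ :=
      (measure (deg b)).wf.has_min {p | p ∈ I ∧ p ≠ 0} ((Submodule.ne_bot_iff I).1 hne)
    refine ⟨h, le_antisymm (fun p hp => ?_) (Ideal.span_singleton_le_iff_mem I |>.2 hI)⟩
    obtain ⟨q, hq⟩ := hR.exists_sub_mul_mem_degLT h0 p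
    by_contra hp'
    have hr : p - q * h ≠ 0 := fun hr =>
      hp' (Ideal.mem_span_singleton'.2 ⟨q, (sub_eq_zero.1 hr).symm⟩)
    exact hmin _ ⟨sub_mem hp (I.mul_mem_left q hI), hr⟩ ((mem_degLT_iff.1 hq).resolve_left hr)

theorem one_mem_span_singleton_of_deg_eq_zero {p : R} (hp : p ≠ 0) (hdeg : deg b p = 0) :
    (1 : R) ∈ Ideal.span {p} := by
  have ha := leadCoeff_ne_zero (b := b) hp
  have hconst := sub_leadCoeff_smul_basis_mem_degLT (b := b) p
  set a := leadCoeff b p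
  rw [hdeg, hR.basis_eq_pow, pow_zero] at hconst
  refine Ideal.mem_span_singleton'.2 ⟨a⁻¹ • (1 : R), ?_⟩
  rw [smul_one_mul, sub_eq_zero.1 ((mem_degLT_iff.1 hconst).resolve_right (Nat.not_lt_zero _)),
    smul_smul, inv_mul_cancel₀ ha, one_smul]

theorem exists_common_right_factor_iff {f g : R} (hf : f ≠ 0) :
    (∃ h : R, 0 < deg b h ∧ f ∈ Ideal.span {h} ∧ g ∈ Ideal.span {h}) ↔
      (1 : R) ∉ Ideal.span {f, g} := by
  have := hR.noZeroDivisors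
  have : Nontrivial R := ⟨⟨b 0, 0, b.ne_zero 0⟩⟩
  constructor
  · rintro ⟨h, hh, hfh, hgh⟩ h1
    have hspan : Ideal.span {f, g} ≤ Ideal.span {h} :=
      Ideal.span_le.2 (Set.insert_subset_iff.2 ⟨hfh, Set.singleton_subset_iff.2 hgh⟩)
    obtain ⟨a, ha⟩ := Ideal.mem_span_singleton'.1 (hspan h1)
    have hdeg := congrArg (deg b) ha
    rw [hR.deg_mul (left_ne_zero_of_mul_eq_one ha) (right_ne_zero_of_mul_eq_one ha), hR.deg_one]
      at hdeg
    omega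
  · intro h1
    obtain ⟨h, hJ⟩ := (hR.isPrincipalIdealRing.principal (Ideal.span {f, g})).principal
    replace hJ : Ideal.span {f, g} = Ideal.span {h} := hJ
    have hfh : f ∈ Ideal.span {h} := hJ ▸ Ideal.subset_span (Set.mem_insert f _)
    have hgh : g ∈ Ideal.span {h} := hJ ▸ Ideal.subset_span (Set.mem_insert_of_mem f rfl)
    refine ⟨h, Nat.pos_of_ne_zero fun hdeg => h1 ?_, hfh, hgh⟩
    have h0 : h ≠ 0 := by
      rintro rfl
      exact hf (by simpa using hfh)
    exact hJ ▸ hR.one_mem_span_singleton_of_deg_eq_zero h0 hdeg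

/-- Its matrix in the monomial bases is the Sylvester matrix of `f` and `g`. -/
noncomputable def sylvesterMap (f g : R) :
    degLT b (deg b g) × degLT b (deg b f) →ₗ[F] degLT b (deg b f + deg b g) :=
  LinearMap.codRestrict _
    (((LinearMap.mulRight F f).comp (Submodule.subtype _)).coprod
      ((LinearMap.mulRight F g).comp (Submodule.subtype _)))
    fun x => add_mem (add_comm (deg b f) _ ▸ hR.mul_mem_degLT_add_deg x.1.2 f)
      (hR.mul_mem_degLT_add_deg x.2.2 g)

theorem sylvesterMap_injective_iff_surjective (f g : R) :
    Function.Injective (hR.sylvesterMap f g) ↔ Function.Surjective (hR.sylvesterMap f g) :=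
  LinearMap.injective_iff_surjective_of_finrank_eq_finrank <| by
    rw [Module.finrank_prod, finrank_degLT, finrank_degLT, finrank_degLT, add_comm]

theorem exists_relation_iff_not_injective {f g : R} (hf : 0 < deg b f) (hg : 0 < deg b g) :
    (∃ c d : R, ¬(c = 0 ∧ d = 0) ∧ c * f + d * g = 0 ∧
      deg b c < deg b g ∧ deg b d < deg b f) ↔ ¬Function.Injective (hR.sylvesterMap f g) := by
  simp only [injective_iff_map_eq_zero, not_forall]
  constructor
  · rintro ⟨c, d, hcd, hsum, hc, hd⟩
    refine ⟨(⟨c, mem_degLT_iff.2 (Or.inr hc)⟩, ⟨d, mem_degLT_iff.2 (Or.inr hd)⟩),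
      Subtype.ext hsum, fun h => hcd ?_⟩
    simp only [Prod.mk_eq_zero, Submodule.mk_eq_zero] at h
    exact h
  · rintro ⟨⟨⟨c, hc⟩, ⟨d, hd⟩⟩, hsum, hcd⟩
    refine ⟨c, d, fun h => hcd ?_, congrArg Subtype.val hsum,
      deg_lt_of_mem_degLT hg hc, deg_lt_of_mem_degLT hf hd⟩
    simp only [Prod.mk_eq_zero, Submodule.mk_eq_zero]
    exact h

theorem one_mem_span_of_surjective {f g : R} (hfg : 0 < deg b f + deg b g)
    (hS : Function.Surjective (hR.sylvesterMap f g)) : (1 : R) ∈ Ideal.span {f, g} := by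
  obtain ⟨x, hx⟩ := hS ⟨1, hR.one_mem_degLT hfg⟩
  exact Ideal.mem_span_pair.2 ⟨x.1, x.2, congrArg Subtype.val hx⟩

theorem surjective_of_one_mem_span {f g c d : R} (hg : g ≠ 0) (hc : c ≠ 0)
    (hcg : deg b c ≤ deg b g) (hcd : c * f + d * g = 0) (h1 : (1 : R) ∈ Ideal.span {f, g}) :
    Function.Surjective (hR.sylvesterMap f g) := by
  intro y
  obtain ⟨u, v, huv⟩ := Ideal.mem_span_pair.1 (by simpa using Ideal.mul_mem_left _ (y : R) h1)
  -- reduce the coefficient of `f` modulo `c`, using `c * f = - d * g`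
  obtain ⟨q, hq⟩ := hR.exists_sub_mul_mem_degLT hc u
  have hsum : (u - q * c) * f + (v - q * d) * g = y := by
    rw [← huv, ← sub_zero (u * f + v * g), ← mul_zero q, ← hcd]
    noncomm_ring
  have hrf : (u - q * c) * f ∈ degLT b (deg b f + deg b g) := by
    rw [add_comm]
    exact hR.mul_mem_degLT_add_deg (degLT_mono hcg hq) f
  have hdg : (v - q * d) * g ∈ degLT b (deg b f + deg b g) := by
    rw [eq_sub_of_add_eq' hsum]
    exact sub_mem y.2 hrf
  exact ⟨(⟨_, degLT_mono hcg hq⟩, ⟨_, (hR.mul_mem_degLT_iff hg).1 hdg⟩),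
    Subtype.ext hsum⟩

end IsSkewPolyBasis

theorem common_right_factor_iff_general [DivisionRing F] [Ring R] [Module F R]
    (σ : F →+* F) (δ : F →+ F)
    (i : F →+* R) (X : R)
    (hsmul : ∀ (a : F) (r : R), a • r = i a * r)
    (b : Module.Basis ℕ F R) (hb : ∀ n : ℕ, b n = X ^ n)
    (hcomm : ∀ a : F, X * i a = i (σ a) * X + i (δ a))
    (f g : R) (hf : 0 < deg b f) (hg : 0 < deg b g) :
    (∃ h : R, 0 < deg b h ∧ f ∈ Ideal.span {h} ∧ g ∈ Ideal.span {h}) ↔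
    (∃ c d : R, ¬(c = 0 ∧ d = 0) ∧ c * f + d * g = 0 ∧
      deg b c < deg b g ∧ deg b d < deg b f) := by
  have : IsScalarTower F R R :=
    ⟨fun a p q => by rw [smul_eq_mul, smul_eq_mul, hsmul, hsmul, mul_assoc]⟩
  have hR : IsSkewPolyBasis σ δ X b :=
    ⟨hb, fun a p => by rw [hsmul, hsmul, hsmul, ← mul_assoc, hcomm, add_mul, mul_assoc]⟩
  have := hR.noZeroDivisors
  rw [hR.exists_common_right_factor_iff (ne_zero_of_deg_pos hf)]
  constructor
  · intro h1
    rw [hR.exists_relation_iff_not_injective hf hg, hR.sylvesterMap_injective_iff_surjective]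
    exact mt (hR.one_mem_span_of_surjective (by omega)) h1
  · intro hrel
    have hS := (hR.exists_relation_iff_not_injective hf hg).1 hrel
    rw [hR.sylvesterMap_injective_iff_surjective] at hS
    obtain ⟨c, d, hcd, hsum, hc, -⟩ := hrel
    have hc0 : c ≠ 0 := by
      rintro rfl
      exact hcd ⟨rfl, by simpa [ne_zero_of_deg_pos hg] using hsum⟩
    exact mt (hR.surjective_of_one_mem_span (ne_zero_of_deg_pos hg) hc0 hc.le hsum) hS

/-- `f, g` of degrees `m, n` have a common non-unit right factor iff there are
`c, d`, not both zero, with `cf + dg = 0`, `deg c < n` and `deg d < m`. -/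
theorem common_right_factor_iff [DivisionRing F] [Ring R] [Module F R]
    (σ : F →+* F) (δ : F →+ F)
    (hδ : ∀ a b : F, δ (a * b) = σ a * δ b + δ a * b)
    (i : F →+* R) (X : R)
    (hsmul : ∀ (a : F) (r : R), a • r = i a * r)
    (b : Module.Basis ℕ F R) (hb : ∀ n : ℕ, b n = X ^ n)
    (hcomm : ∀ a : F, X * i a = i (σ a) * X + i (δ a))
    (f g : R) (hf : 0 < deg b f) (hg : 0 < deg b g) :
    (∃ h : R, 0 < deg b h ∧ f ∈ Ideal.span {h} ∧ g ∈ Ideal.span {h}) ↔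
    (∃ c d : R, ¬(c = 0 ∧ d = 0) ∧ c * f + d * g = 0 ∧
      deg b c < deg b g ∧ deg b d < deg b f) :=
  common_right_factor_iff_general σ δ i X hsmul b hb hcomm f g hf hg
end

section
/- Let F be a division ring, R = F[x;σ,δ], f = Σᵢ aᵢxⁱ ∈ R, and a ∈ F. Define N₀(a) = 1 and Nᵢ(a) = σ(N_{i−1}(a))·a + δ(N_{i−1}(a)). Then the remainder of f upon right division by x − a equals the constant Σᵢ aᵢ·Nᵢ(a). -/
variable {F R : Type*}

/-- Modulo the left ideal `R (X - i a)`, `X ^ (n + 1) = X * X ^ n ≡ X * i (N n) ≡ i (N (n + 1))`: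
commuting `X` past `i (N n)` and replacing `X` by `i a` is exactly the recurrence for `N`. -/
theorem exists_pow_eq_mul_sub_add [Ring F] [Ring R] (σ δ : F → F) (i : F →+* R) (X : R)
    (hcomm : ∀ c : F, X * i c = i (σ c) * X + i (δ c))
    (a : F) (N : ℕ → F) (hN0 : N 0 = 1) (hNs : ∀ k : ℕ, N (k + 1) = σ (N k) * a + δ (N k))
    (n : ℕ) : ∃ q : R, X ^ n = q * (X - i a) + i (N n) := by
  induction n with
  | zero => exact ⟨0, by simp [hN0]⟩
  | succ n ih =>
    obtain ⟨q, hq⟩ := ih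
    refine ⟨X * q + i (σ (N n)), ?_⟩
    rw [pow_succ', hq, mul_add, hcomm, hNs, map_add, map_mul]
    noncomm_ring

theorem Module.Basis.eq_sum_repr_mul_pow [DivisionRing F] [Ring R] [Module F R]
    (i : F →+* R) (X : R) (hsmul : ∀ (c : F) (r : R), c • r = i c * r)
    (b : Module.Basis ℕ F R) (hb : ∀ n : ℕ, b n = X ^ n) (f : R) :
    f = ∑ k ∈ (b.repr f).support, i (b.repr f k) * X ^ k := by
  conv_lhs => rw [← b.linearCombination_repr f]
  rw [Finsupp.linearCombination_apply, Finsupp.sum]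
  exact Finset.sum_congr rfl fun k _ => by rw [hsmul, hb]

theorem right_evaluation_formula_general [DivisionRing F] [Ring R] [Module F R]
    (σ : F →+* F) (δ : F →+ F)
    (i : F →+* R) (X : R)
    (hsmul : ∀ (a : F) (r : R), a • r = i a * r)
    (b : Module.Basis ℕ F R) (hb : ∀ n : ℕ, b n = X ^ n)
    (hcomm : ∀ a : F, X * i a = i (σ a) * X + i (δ a))
    (a : F) (N : ℕ → F) (hN0 : N 0 = 1)
    (hNs : ∀ k : ℕ, N (k + 1) = σ (N k) * a + δ (N k))
    (f : R) :
    ∃ q : R, f = q * (X - i a) + i (∑ k ∈ (b.repr f).support, b.repr f k * N k) := by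
  choose q hq using exists_pow_eq_mul_sub_add σ δ i X hcomm a N hN0 hNs
  refine ⟨∑ k ∈ (b.repr f).support, i (b.repr f k) * q k, ?_⟩
  conv_lhs => rw [b.eq_sum_repr_mul_pow i X hsmul hb f]
  rw [Finset.sum_mul, map_sum, ← Finset.sum_add_distrib]
  refine Finset.sum_congr rfl fun k _ => ?_
  rw [hq k, mul_add, mul_assoc, map_mul]

/-- Right evaluation: the remainder of `f = Σ aᵢ Xⁱ` upon right division by
`X − a` is the constant `Σ aᵢ Nᵢ(a)`, where `N₀(a) = 1` and
`Nᵢ(a) = σ(Nᵢ₋₁(a))a + δ(Nᵢ₋₁(a))`. -/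
theorem right_evaluation_formula [DivisionRing F] [Ring R] [Module F R]
    (σ : F →+* F) (δ : F →+ F)
    (hδ : ∀ a b : F, δ (a * b) = σ a * δ b + δ a * b)
    (i : F →+* R) (X : R)
    (hsmul : ∀ (a : F) (r : R), a • r = i a * r)
    (b : Module.Basis ℕ F R) (hb : ∀ n : ℕ, b n = X ^ n)
    (hcomm : ∀ a : F, X * i a = i (σ a) * X + i (δ a))
    (a : F) (N : ℕ → F) (hN0 : N 0 = 1)
    (hNs : ∀ k : ℕ, N (k + 1) = σ (N k) * a + δ (N k))
    (f : R) :
    ∃ q : R, f = q * (X - i a) + i (∑ k ∈ (b.repr f).support, b.repr f k * N k) :=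
  right_evaluation_formula_general σ δ i X hsmul b hb hcomm a N hN0 hNs f
end

section
/- Let F be a division ring and R = F[x;σ,δ]. For f, g ∈ R and a ∈ F with right evaluations f(·), g(·) defined via right division by x − a: if g(a) = 0 then (f·g)(a) = 0, and if g(a) ≠ 0 then (f·g)(a) = f(a^{g(a)})·g(a), where a^{c} := σ(c)·a·c⁻¹ + δ(c)·c⁻¹ for c ∈ F*. -/
/-!
The remainder upon right division by `x - a` is unique: if `p ≠ 0` has degree `N`, then in
`p (x - a) = p x - p a` the term `p x` has a nonzero coefficient at `x ^ (N + 1)`, while `p a` has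
degree `≤ N` because moving `a` past `x ^ k` only produces terms of degree `≤ k`; so `p (x - a)` is
never a constant. Write `g = q (x - a) + c`. Then `f g = f q (x - a) + f c`, which settles `c = 0`.
For `c ≠ 0` the conjugate is exactly what makes `(x - a^c) c = σ(c) (x - a)`, so
`f = p (x - a^c) + f(a^c)` gives `f c = p σ(c) (x - a) + f(a^c) c`.
-/

variable {F R : Type*}

namespace SkewPolynomial

variable [DivisionRing F] [Ring R] {i : F →+* R} {X : R}

theorem X_sub_conj_mul_C {σ δ : F → F} (hcomm : ∀ a : F, X * i a = i (σ a) * X + i (δ a))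
    (a : F) {c : F} (hc : c ≠ 0) :
    (X - i (σ c * a * c⁻¹ + δ c * c⁻¹)) * i c = i (σ c) * (X - i a) := by
  have hconj : (σ c * a * c⁻¹ + δ c * c⁻¹) * c = σ c * a + δ c := by
    rw [add_mul, inv_mul_cancel_right₀ hc, inv_mul_cancel_right₀ hc]
  rw [sub_mul, hcomm, ← map_mul, hconj, map_add, map_mul, mul_sub]
  abel

variable [Module F R] {b : Module.Basis ℕ F R}

theorem isScalarTower_of_smul_eq_mul (hsmul : ∀ (a : F) (r : R), a • r = i a * r) :
    IsScalarTower F R R :=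
  ⟨fun a r s => by simp only [smul_eq_mul, hsmul, mul_assoc]⟩

variable (b) in
noncomputable def degreeLE (n : ℕ) : Submodule F R := Submodule.span F (b '' Set.Iic n)

theorem mem_degreeLE_iff {r : R} {n : ℕ} :
    r ∈ degreeLE b n ↔ ∀ m, n < m → b.repr r m = 0 := by
  rw [degreeLE, b.mem_span_image]
  refine ⟨fun h m hm => ?_, fun h m hm => ?_⟩
  · by_contra hne
    exact absurd (h (Finsupp.mem_support_iff.mpr hne)) (Set.notMem_Iic.mpr hm)
  · by_contra hlt
    exact Finsupp.mem_support_iff.mp hm (h m (not_le.mp hlt))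

theorem degreeLE_mono {m n : ℕ} (h : m ≤ n) : degreeLE b m ≤ degreeLE b n :=
  Submodule.span_mono (Set.image_mono (Set.Iic_subset_Iic.mpr h))

theorem mem_degreeLE_deg (r : R) : r ∈ degreeLE b (deg b r) :=
  mem_degreeLE_iff.mpr fun _ hm => Finsupp.notMem_support_iff.mp fun h =>
    absurd (Finset.le_sup (f := id) h) (not_le.mpr hm)

variable (hsmul : ∀ (a : F) (r : R), a • r = i a * r) (hb : ∀ n : ℕ, b n = X ^ n)
include hsmul hb

theorem repr_mul_X_succ (r : R) (n : ℕ) : b.repr (r * X) (n + 1) = b.repr r n := by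
  have := isScalarTower_of_smul_eq_mul hsmul
  have key : Finsupp.lapply (n + 1) ∘ₗ b.repr.toLinearMap ∘ₗ LinearMap.mulRight F X =
      Finsupp.lapply n ∘ₗ b.repr.toLinearMap := by
    refine b.ext fun k => ?_
    have hbX : b k * X = b (k + 1) := by rw [hb, hb, pow_succ]
    simp [hbX, Finsupp.single_apply]
  exact LinearMap.congr_fun key r

theorem mul_X_mem_degreeLE {r : R} {n : ℕ} (hr : r ∈ degreeLE b n) :
    r * X ∈ degreeLE b (n + 1) := by
  refine mem_degreeLE_iff.mpr fun m hm => ?_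
  obtain ⟨k, rfl⟩ : ∃ k, m = k + 1 := ⟨m - 1, by omega⟩
  rw [repr_mul_X_succ hsmul hb]
  exact mem_degreeLE_iff.mp hr k (by omega)

theorem C_mem_degreeLE_zero (a : F) : i a ∈ degreeLE b 0 := by
  have hC : i a = a • b 0 := by rw [hsmul, hb, pow_zero, mul_one]
  rw [hC]
  exact Submodule.smul_mem _ _ (Submodule.subset_span ⟨0, Set.mem_Iic.mpr le_rfl, rfl⟩)

variable {σ δ : F → F} (hcomm : ∀ a : F, X * i a = i (σ a) * X + i (δ a))
include hcomm

theorem X_pow_mul_C_mem_degreeLE (n : ℕ) (a : F) : X ^ n * i a ∈ degreeLE b n := by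
  induction n generalizing a with
  | zero => simpa using C_mem_degreeLE_zero hsmul hb a
  | succ n ih =>
    rw [pow_succ, mul_assoc, hcomm, mul_add, ← mul_assoc]
    exact add_mem (mul_X_mem_degreeLE hsmul hb (ih _)) (degreeLE_mono n.le_succ (ih _))

theorem mul_C_mem_degreeLE {r : R} {n : ℕ} (hr : r ∈ degreeLE b n) (a : F) :
    r * i a ∈ degreeLE b n := by
  have := isScalarTower_of_smul_eq_mul hsmul
  suffices degreeLE b n ≤ (degreeLE b n).comap (LinearMap.mulRight F (i a)) from this hr
  refine Submodule.span_le.mpr ?_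
  rintro _ ⟨k, hk, rfl⟩
  rw [SetLike.mem_coe, Submodule.mem_comap, LinearMap.mulRight_apply, hb]
  exact degreeLE_mono hk (X_pow_mul_C_mem_degreeLE hsmul hb hcomm k a)

theorem eq_zero_of_mul_X_sub_C_eq_C {p : R} {a d : F} (h : p * (X - i a) = i d) : p = 0 := by
  by_contra hp
  obtain ⟨N, hN, hNdeg⟩ := Finset.exists_mem_eq_sup _
    (Finsupp.support_nonempty_iff.mpr (b.repr.map_ne_zero_iff.mpr hp)) id
  have hpX : p * X = p * i a + i d := by rw [← h, mul_sub, add_sub_cancel]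
  have hrhs : p * i a + i d ∈ degreeLE b N := by
    rw [← id_eq N, ← hNdeg]
    exact add_mem (mul_C_mem_degreeLE hsmul hb hcomm (mem_degreeLE_deg p) a)
      (degreeLE_mono (Nat.zero_le _) (C_mem_degreeLE_zero hsmul hb d))
  apply Finsupp.mem_support_iff.mp hN
  rw [← repr_mul_X_succ hsmul hb, hpX]
  exact mem_degreeLE_iff.mp hrhs (N + 1) N.lt_succ_self

theorem remainder_unique {r q₁ q₂ : R} {a d₁ d₂ : F}
    (h₁ : r = q₁ * (X - i a) + i d₁) (h₂ : r = q₂ * (X - i a) + i d₂) : d₁ = d₂ := by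
  have : Nontrivial R := ⟨⟨b 0, 0, b.ne_zero 0⟩⟩
  have hsub : (q₁ - q₂) * (X - i a) = i (d₂ - d₁) := by
    rw [sub_mul, map_sub, sub_eq_sub_iff_add_eq_add, ← h₁, add_comm]
    exact h₂
  have hq : q₁ = q₂ := sub_eq_zero.mp (eq_zero_of_mul_X_sub_C_eq_C hsmul hb hcomm hsub)
  rw [h₂, hq, add_right_inj] at h₁
  exact i.injective h₁.symm

end SkewPolynomial

open SkewPolynomial in
theorem right_evaluation_of_product_general [DivisionRing F] [Ring R] [Module F R]
    (σ : F →+* F) (δ : F →+ F)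
    (i : F →+* R) (X : R)
    (hsmul : ∀ (a : F) (r : R), a • r = i a * r)
    (b : Module.Basis ℕ F R) (hb : ∀ n : ℕ, b n = X ^ n)
    (hcomm : ∀ a : F, X * i a = i (σ a) * X + i (δ a))
    (ev : F → R → F)
    (hev : ∀ (a : F) (h : R), ∃ q : R, h = q * (X - i a) + i (ev a h))
    (a : F) (f g : R) :
    (ev a g = 0 → ev a (f * g) = 0) ∧
    (ev a g ≠ 0 → ev a (f * g) =
      ev (σ (ev a g) * a * (ev a g)⁻¹ + δ (ev a g) * (ev a g)⁻¹) f * ev a g) := by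
  obtain ⟨q, hq⟩ := hev a g
  obtain ⟨Q, hQ⟩ := hev a (f * g)
  refine ⟨fun hg => remainder_unique hsmul hb hcomm hQ (q₂ := f * q) ?_, fun hg => ?_⟩
  · rw [hq, hg, map_zero, add_zero, add_zero, mul_assoc]
  set c := ev a g
  set a' := σ c * a * c⁻¹ + δ c * c⁻¹
  obtain ⟨p, hp⟩ := hev a' f
  have hfc : f * i c = p * i (σ c) * (X - i a) + i (ev a' f * c) := by
    conv_lhs => rw [hp]
    rw [add_mul, mul_assoc, X_sub_conj_mul_C hcomm a hg, map_mul, mul_assoc]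
  have hfg : f * g = (f * q + p * i (σ c)) * (X - i a) + i (ev a' f * c) := by
    rw [hq, mul_add, hfc, ← mul_assoc f q, add_mul, add_assoc]
  exact remainder_unique hsmul hb hcomm hQ hfg

/-- Product formula for right evaluation: if `g(a) = 0` then `(fg)(a) = 0`;
if `g(a) ≠ 0` then `(fg)(a) = f(a^{g(a)}) g(a)`, where
`a^c = σ(c)ac⁻¹ + δ(c)c⁻¹`. -/
theorem right_evaluation_of_product [DivisionRing F] [Ring R] [Module F R]
    (σ : F →+* F) (δ : F →+ F)
    (hδ : ∀ a b : F, δ (a * b) = σ a * δ b + δ a * b)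
    (i : F →+* R) (X : R)
    (hsmul : ∀ (a : F) (r : R), a • r = i a * r)
    (b : Module.Basis ℕ F R) (hb : ∀ n : ℕ, b n = X ^ n)
    (hcomm : ∀ a : F, X * i a = i (σ a) * X + i (δ a))
    (ev : F → R → F)
    (hev : ∀ (a : F) (h : R), ∃ q : R, h = q * (X - i a) + i (ev a h))
    (a : F) (f g : R) :
    (ev a g = 0 → ev a (f * g) = 0) ∧
    (ev a g ≠ 0 → ev a (f * g) =
      ev (σ (ev a g) * a * (ev a g)⁻¹ + δ (ev a g) * (ev a g)⁻¹) f * ev a g) :=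
  right_evaluation_of_product_general σ δ i X hsmul b hb hcomm ev hev a f g
end

section
/- Let F be a division ring, R = F[x;σ,δ], and f, g ∈ R of positive degrees m and n. Let φ : P_{n−1} ⊕ P_{m−1} → P_{n+m−1} be the left F-linear map φ(a,b) = af + bg, where P_k denotes skew polynomials of degree ≤ k. Then dim ker φ = deg(gcrd(f,g)), where gcrd(f,g) is a generator of the left ideal Rf + Rg. -/
/-!
Write `n = deg g`, `m = deg f`, `d = deg M`. Comparing leading coefficients,
`lc (p * q) = lc p * σ ^ (deg p) (lc q)`, so degrees add and right division with remainder works.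
The kernel in question is the kernel of the Sylvester map `(a, c) ↦ a * f + c * g` on
`P_{n-1} × P_{m-1}`, a space of dimension `n + m`. Its image is `{e * M | deg e ≤ n + m - 1 - d}`,
of dimension `n + m - d`, and rank–nullity gives the dimension `d` of the kernel.
For the inclusion `⊇`, write `e * M = u * f + v * g`. Counting dimensions yields `h ≠ 0` of degree
`≤ n` with `h * f ∈ R g`; dividing `u` on the right by `h` lowers the coefficient of `f` below
degree `n`, and the coefficient of `g` then has degree `< m` for degree reasons.
-/

variable {F R : Type*}

namespace OreExtension

section Degree

variable [DivisionRing F] [Ring R] [Module F R] {b : Module.Basis ℕ F R}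

variable (b) in
/-- The space `P_k` of elements of degree at most `k`. -/
noncomputable def degLE (k : ℕ) : Submodule F R :=
  (Finsupp.supported F F (Set.Iic k)).comap b.repr.toLinearMap

@[simp]
lemma deg_zero : deg b (0 : R) = 0 := by simp [deg]

lemma mem_degLE {p : R} {k : ℕ} : p ∈ degLE b k ↔ deg b p ≤ k := by
  simp only [degLE, Submodule.mem_comap, Finsupp.mem_supported, deg, Finset.sup_le_iff]
  rfl

lemma mem_degLE_sub_one {p : R} {n : ℕ} (hn : 0 < n) :
    p ∈ degLE b (n - 1) ↔ p = 0 ∨ deg b p < n := by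
  rw [mem_degLE]
  rcases eq_or_ne p 0 with rfl | hp
  · simp
  · simp only [hp, false_or]
    omega

lemma ne_zero_of_deg_pos {p : R} (hp : 0 < deg b p) : p ≠ 0 := by
  rintro rfl
  simp at hp

lemma le_deg_of_repr_ne_zero {p : R} {j : ℕ} (h : b.repr p j ≠ 0) : j ≤ deg b p :=
  Finset.le_sup (f := id) (Finsupp.mem_support_iff.2 h)

lemma repr_eq_zero_of_deg_lt {p : R} {j : ℕ} (h : deg b p < j) : b.repr p j = 0 := by
  by_contra hj
  exact h.not_ge (le_deg_of_repr_ne_zero hj)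

lemma repr_deg_ne_zero {p : R} (hp : p ≠ 0) : b.repr p (deg b p) ≠ 0 := by
  have hs : (b.repr p).support.Nonempty := by simpa using hp
  obtain ⟨j, hj, hsup⟩ := (b.repr p).support.exists_mem_eq_sup hs id
  rw [deg, hsup]
  exact Finsupp.mem_support_iff.1 hj

lemma eq_zero_or_deg_lt_of_repr_eq_zero {p : R} {k : ℕ} (hp : deg b p ≤ k)
    (hk : b.repr p k = 0) : p = 0 ∨ deg b p < k := by
  refine or_iff_not_imp_left.2 fun h0 => hp.lt_of_ne fun h => ?_
  exact repr_deg_ne_zero h0 (h ▸ hk)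

variable (b) in
noncomputable def degLEEquiv (k : ℕ) : degLE b k ≃ₗ[F] (Set.Iic k →₀ F) :=
  (b.repr.submoduleMap (degLE b k)).trans <|
    (LinearEquiv.ofEq _ _ (by simp [degLE, Submodule.map_comap_eq, b.repr.range])).trans
      (Finsupp.supportedEquivFinsupp _)

instance (k : ℕ) : FiniteDimensional F (degLE b k) :=
  (degLEEquiv b k).symm.finiteDimensional

variable (b) in
lemma finrank_degLE (k : ℕ) : Module.finrank F (degLE b k) = k + 1 := by
  rw [(degLEEquiv b k).finrank_eq, Module.finrank_finsupp_self, ← Set.toFinset_card,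
    Set.toFinset_Iic, Nat.card_Iic]

variable {X : R} (hb : ∀ n, b n = X ^ n)
include hb

lemma repr_smul_pow (u : F) (k : ℕ) : b.repr (u • X ^ k) = Finsupp.single k u := by
  rw [← hb, map_smul, b.repr_self, Finsupp.smul_single_one]

lemma deg_smul_pow_le (u : F) (k : ℕ) : deg b (u • X ^ k) ≤ k := by
  rw [deg, repr_smul_pow hb]
  exact Finset.sup_le fun j hj => (Finset.mem_singleton.1 (Finsupp.support_single_subset hj)).le

lemma sum_repr_smul_pow (p : R) : ∑ t ∈ (b.repr p).support, b.repr p t • X ^ t = p := by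
  conv_rhs => rw [← b.linearCombination_repr p]
  simp [Finsupp.linearCombination_apply, Finsupp.sum, hb]

lemma sum_pow_mul_smul_pow (k : ℕ) (q : R) :
    ∑ t ∈ (b.repr q).support, X ^ k * (b.repr q t • X ^ t) = X ^ k * q := by
  rw [← Finset.mul_sum, sum_repr_smul_pow hb]

lemma sum_smul_pow_mul [IsScalarTower F R R] (p q : R) :
    ∑ t ∈ (b.repr p).support, b.repr p t • (X ^ t * q) = p * q := by
  simp_rw [← smul_mul_assoc, ← Finset.sum_mul, sum_repr_smul_pow hb]

end Degree

section Ore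

variable [DivisionRing F] [Ring R] [Module F R] {b : Module.Basis ℕ F R} {X : R}
  {σ : F →+* F} {δ : F → F} (hX : ∀ (a : F) (p : R), X * (a • p) = σ a • (X * p) + δ a • p)

include hX in
lemma pow_succ_mul_smul_pow (k t : ℕ) (v : F) :
    X ^ (k + 1) * (v • X ^ t) = X ^ k * (σ v • X ^ (t + 1)) + X ^ k * (δ v • X ^ t) := by
  rw [pow_succ, mul_assoc, hX, ← pow_succ', mul_add]

variable (hb : ∀ n, b n = X ^ n)
include hb hX

lemma deg_pow_mul_smul_pow_le (k t : ℕ) (v : F) : deg b (X ^ k * (v • X ^ t)) ≤ k + t := by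
  induction k generalizing t v with
  | zero => simpa using deg_smul_pow_le hb v t
  | succ k ih =>
    rw [← mem_degLE, pow_succ_mul_smul_pow hX]
    exact add_mem (mem_degLE.2 ((ih _ _).trans (by omega)))
      (mem_degLE.2 ((ih _ _).trans (by omega)))

lemma repr_pow_mul_smul_pow (k t : ℕ) (v : F) :
    b.repr (X ^ k * (v • X ^ t)) (k + t) = (σ ^ k) v := by
  induction k generalizing t v with
  | zero => simp [repr_smul_pow hb]
  | succ k ih =>
    rw [pow_succ_mul_smul_pow hX, map_add b.repr, Finsupp.add_apply,
      repr_eq_zero_of_deg_lt ((deg_pow_mul_smul_pow_le hX hb k t _).trans_lt (by omega)),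
      add_zero, show k + 1 + t = k + (t + 1) by omega, ih, pow_succ, RingHom.mul_def,
      RingHom.comp_apply]

lemma deg_pow_mul_le (k : ℕ) (q : R) : deg b (X ^ k * q) ≤ k + deg b q := by
  rw [← mem_degLE, ← sum_pow_mul_smul_pow hb]
  refine Submodule.sum_mem _ fun t ht => mem_degLE.2 ?_
  have := le_deg_of_repr_ne_zero (Finsupp.mem_support_iff.1 ht)
  exact (deg_pow_mul_smul_pow_le hX hb k t _).trans (by omega)

lemma repr_pow_mul (k : ℕ) (q : R) :
    b.repr (X ^ k * q) (k + deg b q) = (σ ^ k) (b.repr q (deg b q)) := by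
  rw [← sum_pow_mul_smul_pow hb, map_sum, Finsupp.finsetSum_apply,
    Finset.sum_eq_single (deg b q)]
  · exact repr_pow_mul_smul_pow hX hb k _ _
  · intro t ht hne
    have := le_deg_of_repr_ne_zero (Finsupp.mem_support_iff.1 ht)
    exact repr_eq_zero_of_deg_lt ((deg_pow_mul_smul_pow_le hX hb k t _).trans_lt (by omega))
  · intro h
    simp [Finsupp.notMem_support_iff.1 h]

variable [IsScalarTower F R R]

lemma deg_mul_le (p q : R) : deg b (p * q) ≤ deg b p + deg b q := by
  rw [← mem_degLE, ← sum_smul_pow_mul hb]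
  refine Submodule.sum_mem _ fun t ht => Submodule.smul_mem _ _ (mem_degLE.2 ?_)
  have := le_deg_of_repr_ne_zero (Finsupp.mem_support_iff.1 ht)
  exact (deg_pow_mul_le hX hb t q).trans (by omega)

lemma repr_mul (p q : R) :
    b.repr (p * q) (deg b p + deg b q) =
      b.repr p (deg b p) * (σ ^ deg b p) (b.repr q (deg b q)) := by
  rw [← sum_smul_pow_mul hb, map_sum, Finsupp.finsetSum_apply, Finset.sum_eq_single (deg b p)]
  · rw [map_smul, Finsupp.smul_apply, smul_eq_mul, repr_pow_mul hX hb]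
  · intro t ht hne
    have := le_deg_of_repr_ne_zero (Finsupp.mem_support_iff.1 ht)
    rw [map_smul, Finsupp.smul_apply,
      repr_eq_zero_of_deg_lt ((deg_pow_mul_le hX hb t q).trans_lt (by omega)), smul_zero]
  · intro h
    simp [Finsupp.notMem_support_iff.1 h]

lemma repr_mul_ne_zero {p q : R} (hp : p ≠ 0) (hq : q ≠ 0) :
    b.repr (p * q) (deg b p + deg b q) ≠ 0 := by
  rw [repr_mul hX hb]
  exact mul_ne_zero (repr_deg_ne_zero hp) ((map_ne_zero _).2 (repr_deg_ne_zero hq))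

lemma deg_mul {p q : R} (hp : p ≠ 0) (hq : q ≠ 0) : deg b (p * q) = deg b p + deg b q :=
  (deg_mul_le hX hb p q).antisymm (le_deg_of_repr_ne_zero (repr_mul_ne_zero hX hb hp hq))

lemma noZeroDivisors : NoZeroDivisors R where
  eq_zero_or_eq_zero_of_mul_eq_zero {p q} h := by
    by_contra! hpq
    exact repr_mul_ne_zero hX hb hpq.1 hpq.2 (by rw [h, map_zero, Finsupp.zero_apply])

lemma mul_mem_degLE {p q : R} {k l : ℕ} (hp : p ∈ degLE b k) (hq : q ∈ degLE b l) :
    p * q ∈ degLE b (k + l) :=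
  mem_degLE.2 ((deg_mul_le hX hb p q).trans (add_le_add (mem_degLE.1 hp) (mem_degLE.1 hq)))

lemma exists_eq_mul_add {g : R} (hg : g ≠ 0) (p : R) :
    ∃ q r, p = q * g + r ∧ (r = 0 ∨ deg b r < deg b g) := by
  induction hn : deg b p using Nat.strong_induction_on generalizing p with
  | _ n ih =>
  by_cases hp : p = 0 ∨ deg b p < deg b g
  · exact ⟨0, p, by rw [zero_mul, zero_add], hp⟩
  push Not at hp
  obtain ⟨hp0, hgp⟩ := hp
  set k := deg b p - deg b g
  have hσ : (σ ^ k) (b.repr g (deg b g)) ≠ 0 := (map_ne_zero _).2 (repr_deg_ne_zero hg)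
  set c := b.repr p (deg b p) * ((σ ^ k) (b.repr g (deg b g)))⁻¹
  have hkg : k + deg b g = deg b p := by omega
  -- `c` is chosen so that `c • X ^ k * g` cancels the leading term of `p`
  have hdeg : deg b (p - c • (X ^ k * g)) ≤ deg b p := by
    refine mem_degLE.1 (sub_mem (mem_degLE.2 le_rfl) (Submodule.smul_mem _ _ (mem_degLE.2 ?_)))
    exact hkg ▸ deg_pow_mul_le hX hb k g
  have hlead : b.repr (p - c • (X ^ k * g)) (deg b p) = 0 := by
    rw [map_sub, map_smul, Finsupp.sub_apply, Finsupp.smul_apply, ← hkg, repr_pow_mul hX hb,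
      hkg, smul_eq_mul, inv_mul_cancel_right₀ hσ, sub_self]
  have hsplit : p = c • X ^ k * g + (p - c • (X ^ k * g)) := by
    rw [smul_mul_assoc, add_sub_cancel]
  rcases eq_zero_or_deg_lt_of_repr_eq_zero hdeg hlead with h0 | hlt
  · exact ⟨c • X ^ k, 0, by rwa [h0] at hsplit, Or.inl rfl⟩
  · obtain ⟨q, r, hqr, hr⟩ := ih _ (hn ▸ hlt) _ rfl
    exact ⟨c • X ^ k + q, r, by rw [hsplit, hqr, add_mul, add_assoc], hr⟩

end Ore

section Sylvester

variable [DivisionRing F] [Ring R] [Module F R] [IsScalarTower F R R] (b : Module.Basis ℕ F R)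

noncomputable def sylvesterMap (f g : R) (k l : ℕ) : degLE b k × degLE b l →ₗ[F] R :=
  ((LinearMap.mulRight F f).domRestrict _).coprod ((LinearMap.mulRight F g).domRestrict _)

@[simp]
lemma sylvesterMap_apply (f g : R) (k l : ℕ) (y : degLE b k × degLE b l) :
    sylvesterMap b f g k l y = y.1 * f + y.2 * g := rfl

variable {b} {X : R} {σ : F →+* F} {δ : F → F}
  (hX : ∀ (a : F) (p : R), X * (a • p) = σ a • (X * p) + δ a • p) (hb : ∀ n, b n = X ^ n)
include hX hb

lemma exists_mul_eq_mul {g : R} (hg : g ≠ 0) (f : R) :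
    ∃ h w, h ≠ 0 ∧ deg b h ≤ deg b g ∧ h * f = w * g := by
  have := noZeroDivisors hX hb
  set φ := sylvesterMap b f g (deg b g) (deg b f)
  -- `φ` maps a space of dimension `deg g + deg f + 2` into `P_{deg g + deg f}`
  have hrange : Module.finrank F (LinearMap.range φ) ≤ deg b g + deg b f + 1 := by
    rw [← finrank_degLE b]
    refine Submodule.finrank_mono ?_
    rintro _ ⟨y, rfl⟩
    rw [sylvesterMap_apply]
    refine add_mem (mul_mem_degLE hX hb y.1.2 (mem_degLE.2 le_rfl)) ?_
    rw [add_comm]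
    exact mul_mem_degLE hX hb y.2.2 (mem_degLE.2 le_rfl)
  have hker : LinearMap.ker φ ≠ ⊥ := by
    have := LinearMap.finrank_range_add_finrank_ker φ
    rw [Module.finrank_prod, finrank_degLE, finrank_degLE] at this
    rw [Ne, ← Submodule.finrank_eq_zero]
    omega
  obtain ⟨⟨⟨a, ha⟩, ⟨c, hc⟩⟩, hac, hne⟩ := (Submodule.ne_bot_iff _).1 hker
  rw [LinearMap.mem_ker, sylvesterMap_apply] at hac
  have ha0 : a ≠ 0 := by
    rintro rfl
    rw [zero_mul, zero_add, mul_eq_zero, or_iff_left hg] at hac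
    subst hac
    exact hne rfl
  exact ⟨a, -c, ha0, mem_degLE.1 ha, by rw [neg_mul, eq_neg_iff_add_eq_zero, hac]⟩

lemma mul_add_mul_mem_range_sylvesterMap {f g : R} (hf : 0 < deg b f) (hg : 0 < deg b g)
    (u v : R) (huv : deg b (u * f + v * g) < deg b f + deg b g) :
    u * f + v * g ∈ LinearMap.range (sylvesterMap b f g (deg b g - 1) (deg b f - 1)) := by
  obtain ⟨h, w, hh, hhg, hhf⟩ := exists_mul_eq_mul hX hb (ne_zero_of_deg_pos hg) f
  obtain ⟨q, a, rfl, ha⟩ := exists_eq_mul_add hX hb hh u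
  set c := q * w + v
  -- the quotient `q` is absorbed into the coefficient of `g` through `h * f = w * g`
  have hac : (q * h + a) * f + v * g = a * f + c * g := by
    rw [add_mul, mul_assoc, hhf, add_mul, ← mul_assoc]
    abel
  rw [hac] at huv ⊢
  have ha' : a ∈ degLE b (deg b g - 1) :=
    (mem_degLE_sub_one hg).2 (ha.imp_right (·.trans_le hhg))
  have hc' : c ∈ degLE b (deg b f - 1) := by
    refine (mem_degLE_sub_one hf).2 (or_iff_not_imp_left.2 fun hc0 => ?_)
    have hcg : c * g ∈ degLE b (deg b f + deg b g - 1) := by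
      rw [← add_sub_cancel_left (a * f) (c * g)]
      have := mem_degLE.1 ha'
      exact sub_mem (mem_degLE.2 (by omega))
        (mem_degLE.2 ((deg_mul_le hX hb a f).trans (by omega)))
    rw [mem_degLE, deg_mul hX hb hc0 (ne_zero_of_deg_pos hg)] at hcg
    omega
  exact ⟨(⟨a, ha'⟩, ⟨c, hc'⟩), rfl⟩

lemma ne_zero_and_deg_le_of_span_sup_eq {f g M : R} (hf : 0 < deg b f)
    (hM : Ideal.span {f} ⊔ Ideal.span {g} = Ideal.span {M}) : M ≠ 0 ∧ deg b M ≤ deg b f := by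
  have hfM : f ∈ Ideal.span {M} := hM ▸ Submodule.mem_sup_left (Ideal.mem_span_singleton_self f)
  obtain ⟨e, he⟩ := Ideal.mem_span_singleton'.1 hfM
  have hef : e * M ≠ 0 := he ▸ ne_zero_of_deg_pos hf
  refine ⟨right_ne_zero_of_mul hef, ?_⟩
  rw [← he, deg_mul hX hb (left_ne_zero_of_mul hef) (right_ne_zero_of_mul hef)]
  omega

lemma range_sylvesterMap {f g M : R} (hf : 0 < deg b f) (hg : 0 < deg b g)
    (hM : Ideal.span {f} ⊔ Ideal.span {g} = Ideal.span {M}) :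
    LinearMap.range (sylvesterMap b f g (deg b g - 1) (deg b f - 1)) =
      (degLE b (deg b f + deg b g - 1 - deg b M)).map (LinearMap.mulRight F M) := by
  have hspan : ∀ x, x ∈ Ideal.span {M} ↔ ∃ u v, u * f + v * g = x := fun x => by
    rw [← hM, ← Ideal.span_insert, Submodule.mem_span_pair]
    rfl
  obtain ⟨hM0, hMf⟩ := ne_zero_and_deg_le_of_span_sup_eq hX hb hf hM
  ext x
  constructor
  · rintro ⟨⟨⟨a, ha⟩, ⟨c, hc⟩⟩, rfl⟩
    obtain ⟨e, he⟩ := Ideal.mem_span_singleton'.1 ((hspan _).2 ⟨a, c, rfl⟩)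
    refine ⟨e, ?_, he⟩
    rcases eq_or_ne e 0 with rfl | he0
    · exact zero_mem _
    have hx : a * f + c * g ∈ degLE b (deg b f + deg b g - 1) := by
      have := mem_degLE.1 ha
      have := mem_degLE.1 hc
      exact add_mem (mem_degLE.2 ((deg_mul_le hX hb a f).trans (by omega)))
        (mem_degLE.2 ((deg_mul_le hX hb c g).trans (by omega)))
    rw [← he, mem_degLE, deg_mul hX hb he0 hM0] at hx
    exact mem_degLE.2 (by omega)
  · rintro ⟨e, he, rfl⟩
    obtain ⟨u, v, huv⟩ := (hspan M).1 (Ideal.mem_span_singleton_self M)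
    have hx : e * u * f + e * v * g = e * M := by rw [mul_assoc, mul_assoc, ← mul_add, huv]
    rw [LinearMap.mulRight_apply, ← hx]
    refine mul_add_mul_mem_range_sylvesterMap hX hb hf hg _ _ ?_
    have := mem_degLE.1 he
    rw [hx]
    exact (deg_mul_le hX hb e M).trans_lt (by omega)

lemma finrank_range_sylvesterMap {f g M : R} (hf : 0 < deg b f) (hg : 0 < deg b g)
    (hM : Ideal.span {f} ⊔ Ideal.span {g} = Ideal.span {M}) :
    Module.finrank F (LinearMap.range (sylvesterMap b f g (deg b g - 1) (deg b f - 1))) =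
      deg b f + deg b g - deg b M := by
  have := noZeroDivisors hX hb
  obtain ⟨hM0, hMf⟩ := ne_zero_and_deg_le_of_span_sup_eq hX hb hf hM
  rw [range_sylvesterMap hX hb hf hg hM,
    (Submodule.equivMapOfInjective _ (mul_left_injective₀ hM0) _).finrank_eq.symm, finrank_degLE]
  omega

end Sylvester
end OreExtension

open OreExtension

theorem finrank_ker_eq_deg_gcrd_general [DivisionRing F] [Ring R] [Module F R]
    (σ : F →+* F) (δ : F →+ F)
    (i : F →+* R) (X : R)
    (hsmul : ∀ (a : F) (r : R), a • r = i a * r)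
    (b : Module.Basis ℕ F R) (hb : ∀ n : ℕ, b n = X ^ n)
    (hcomm : ∀ a : F, X * i a = i (σ a) * X + i (δ a))
    (f g : R) (hf : 0 < deg b f) (hg : 0 < deg b g)
    (M : R) (hM : Ideal.span {f} ⊔ Ideal.span {g} = Ideal.span {M})
    (K : Submodule F (R × R))
    (hK : (K : Set (R × R)) = {p : R × R |
      (p.1 = 0 ∨ deg b p.1 < deg b g) ∧ (p.2 = 0 ∨ deg b p.2 < deg b f) ∧
      p.1 * f + p.2 * g = 0}) :
    Module.finrank F K = deg b M := by
  have : IsScalarTower F R R := ⟨fun a p q => by simp only [smul_eq_mul, hsmul, mul_assoc]⟩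
  have hX : ∀ (a : F) (p : R), X * (a • p) = σ a • (X * p) + δ a • p := fun a p => by
    rw [hsmul, hsmul, hsmul, ← mul_assoc, hcomm, add_mul, mul_assoc]
  set φ := sylvesterMap b f g (deg b g - 1) (deg b f - 1)
  set ι := (degLE b (deg b g - 1)).subtype.prodMap (degLE b (deg b f - 1)).subtype
  have hKφ : K = (LinearMap.ker φ).map ι := by
    ext ⟨p, q⟩
    rw [← SetLike.mem_coe, hK]
    simp [ι, φ, mem_degLE_sub_one hf, mem_degLE_sub_one hg, ← and_rotate (a := _ * f + _ = 0)]
  have hrank := LinearMap.finrank_range_add_finrank_ker φ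
  rw [finrank_range_sylvesterMap hX hb hf hg hM, Module.finrank_prod, finrank_degLE,
    finrank_degLE] at hrank
  have hι : Function.Injective ι := Subtype.val_injective.prodMap Subtype.val_injective
  rw [hKφ, (Submodule.equivMapOfInjective _ hι _).finrank_eq.symm]
  have := (ne_zero_and_deg_le_of_span_sup_eq hX hb hf hM).2
  omega

/-- The kernel of `(a,b) ↦ af + bg` on `P_{n−1} ⊕ P_{m−1}` has dimension
`deg (gcrd f g)`, where `gcrd f g` generates `Rf + Rg`. -/
theorem finrank_ker_eq_deg_gcrd [DivisionRing F] [Ring R] [Module F R]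
    (σ : F →+* F) (δ : F →+ F)
    (hδ : ∀ a b : F, δ (a * b) = σ a * δ b + δ a * b)
    (i : F →+* R) (X : R)
    (hsmul : ∀ (a : F) (r : R), a • r = i a * r)
    (b : Module.Basis ℕ F R) (hb : ∀ n : ℕ, b n = X ^ n)
    (hcomm : ∀ a : F, X * i a = i (σ a) * X + i (δ a))
    (f g : R) (hf : 0 < deg b f) (hg : 0 < deg b g)
    (M : R) (hM : Ideal.span {f} ⊔ Ideal.span {g} = Ideal.span {M})
    (K : Submodule F (R × R))
    (hK : (K : Set (R × R)) = {p : R × R |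
      (p.1 = 0 ∨ deg b p.1 < deg b g) ∧ (p.2 = 0 ∨ deg b p.2 < deg b f) ∧
      p.1 * f + p.2 * g = 0}) :
    Module.finrank F K = deg b M :=
  finrank_ker_eq_deg_gcrd_general σ δ i X hsmul b hb hcomm f g hf hg M hM K hK
end
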